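/- arXiv:2504.08090 — 3 statements merged into one kernel-verified Lean document; each statement's English description precedes it below -/
import Mathlib

section
/- Let k be a commutative field and K = k((t)) the field of formal Laurent series over k. Then every element of K that is algebraic over k lies in k; that is, k((t))/k is a regular extension. -/
/-!
An element of `k((X))` algebraic over `k` is integral over `k⟦X⟧`, and `k⟦X⟧` is integrally
closed with fraction field `k((X))`, so it is a power series `y`, still integral over `k`.
Then `y - y(0)` is integral over `k` and is killed by the augmentation `y ↦ y(0)`; evaluating
its minimal polynomial at it and applying the augmentation shows that the constant coefficient
of that minimal polynomial vanishes, which forces `y - y(0) = 0`.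
-/

theorem AlgHom.algebraMap_apply_eq_of_isIntegral {k A : Type*} [Field k] [CommRing A]
    [IsDomain A] [Algebra k A] (φ : A →ₐ[k] k) {a : A} (ha : IsIntegral k a) :
    algebraMap k A (φ a) = a := by
  set z := a - algebraMap k A (φ a)
  have hz : IsIntegral k z := ha.sub isIntegral_algebraMap
  have hφz : φ z = 0 := by simp [z]
  have hroot : Polynomial.aeval (φ z) (minpoly k z) = 0 := by
    rw [Polynomial.aeval_algHom_apply, minpoly.aeval, map_zero]
  rw [hφz, ← Polynomial.coeff_zero_eq_aeval_zero] at hroot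
  by_contra hne
  exact minpoly.coeff_zero_ne_zero hz (sub_ne_zero.mpr (Ne.symm hne)) hroot

def PowerSeries.constantCoeffAlgHom (k : Type*) [CommRing k] : PowerSeries k →ₐ[k] k :=
  { constantCoeff (R := k) with commutes' := fun _ => by simp }

noncomputable def LaurentSeries.ofPowerSeriesAlgHom (k : Type*) [CommRing k] :
    PowerSeries k →ₐ[k] LaurentSeries k :=
  { algebraMap (PowerSeries k) (LaurentSeries k) with commutes' := fun _ => rfl }

/-- The field of formal Laurent series `k((t))` is a regular extension of `k` : every
Laurent series that is algebraic over `k` is a constant, i.e. lies in (the image of) `k`. -/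
theorem laurentSeries_regular (k : Type*) [Field k] :
    ∀ x : LaurentSeries k, IsAlgebraic k x →
      x ∈ (algebraMap k (LaurentSeries k)).range := by
  intro x hx
  -- `algebraMap k k((X))` is definitionally `algebraMap k⟦X⟧ k((X)) ∘ algebraMap k k⟦X⟧`.
  obtain ⟨y, rfl⟩ := IsIntegrallyClosed.isIntegral_iff.mp
    (RingHom.IsIntegralElem.of_comp (f := algebraMap k (PowerSeries k)) hx.isIntegral)
  have hy : IsIntegral k y :=
    (isIntegral_algHom_iff (LaurentSeries.ofPowerSeriesAlgHom k)
      HahnSeries.ofPowerSeries_injective).mp hx.isIntegral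
  exact ⟨PowerSeries.constantCoeffAlgHom k y,
    congrArg (algebraMap (PowerSeries k) (LaurentSeries k))
      ((PowerSeries.constantCoeffAlgHom k).algebraMap_apply_eq_of_isIntegral hy)⟩
end

section
/- (Generalized Artin lemma) Let G be a profinite group acting faithfully by automorphisms on a division ring h such that the stabilizer of every element of h is open in G. Let k = h^G. If h/k is an outer extension (the only inner automorphism of h fixing k pointwise is the identity), then h/k is an algebraic Galois extension and Gal(h/k) ≅ G as profinite groups. -/
/-- `x` is algebraic over the subset `k` of the division ring `h` : the subdivision ring
generated by `k` and `x` admits a finite family spanning it as a left and as a right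
`k`-vector space. -/
def IsAlgebraicOverSet {h : Type*} [DivisionRing h] (k : Set h) (x : h) : Prop :=
  ∃ (N : ℕ) (b : Fin N → h),
    (∀ y ∈ Subfield.closure (insert x k), ∃ c : Fin N → h,
      (∀ i, c i ∈ k) ∧ y = ∑ i, c i * b i) ∧
    (∀ y ∈ Subfield.closure (insert x k), ∃ c : Fin N → h,
      (∀ i, c i ∈ k) ∧ y = ∑ i, b i * c i)

/-!
For a finite set `S ⊆ h` the pointwise stabiliser `H` of `S` is open, hence of finite index,
and `D = h^H` contains `S` and `k`. Artin's minimal-support argument shows that any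
`[G : H] + 1` elements of `D` are left (and, passing to `hᵐᵒᵖ`, right) dependent over `k`, so
`D` is spanned on either side by at most `[G : H]` elements; this gives algebraicity.
If an automorphism `f` over `k` agreed on `S` with no element of `G`, then `f` and the
`[G : H]` coset representatives would give `[G : H] + 1` ring maps `D → h` over `k`, pairwise
non-conjugate because `h/k` is outer, hence left independent over `h` by Dedekind's argument;
this contradicts the right dimension bound. So `f` agrees with some element of `G` on every
finite set, compactness of `G` gives one `g` with `f = g • ·`, and faithfulness makes it unique.
-/

open Finset MulOpposite

instance MulOpposite.instMulSemiringAction {M R : Type*} [Monoid M] [Semiring R]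
    [MulSemiringAction M R] : MulSemiringAction M Rᵐᵒᵖ where
  __ := MulOpposite.instDistribMulAction
  smul_one _ := unop_injective (smul_one _)
  smul_mul _ _ _ := unop_injective (smul_mul' _ _ _)

def fixedSubfield (M h : Type*) [Monoid M] [DivisionRing h] [MulSemiringAction M h] :
    Subfield h where
  carrier := MulAction.fixedPoints M h
  mul_mem' ha hb m := by rw [smul_mul', ha m, hb m]
  one_mem' := smul_one
  add_mem' ha hb m := by rw [smul_add, ha m, hb m]
  zero_mem' := smul_zero
  neg_mem' ha m := by rw [smul_neg, ha m]
  inv_mem' _ ha m := by rw [smul_inv'', ha m]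

section DivisionRing

variable {h : Type*} [DivisionRing h]

theorem exists_ne_zero_sum_mul_eq_zero {ι κ : Type*} [Fintype ι] [Finite κ]
    (hlt : Nat.card κ < Fintype.card ι) (A : κ → ι → h) :
    ∃ a : ι → h, a ≠ 0 ∧ ∀ j, ∑ i, a i * A j i = 0 := by
  have := Fintype.ofFinite κ
  have hdep : ¬ LinearIndependent h fun i j => A j i := fun hli => by
    have := hli.fintype_card_le_finrank
    rw [Module.finrank_fintype_fun_eq_card] at this
    rw [Nat.card_eq_fintype_card] at hlt
    omega
  obtain ⟨a, ha, i, hi⟩ := Fintype.not_linearIndependent_iff.1 hdep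
  exact ⟨a, Function.ne_iff.2 ⟨i, hi⟩, fun j => by simpa using congrFun ha j⟩

theorem eq_zero_of_forall_sum_mul_monoidHom_eq_zero {M ι : Type*} [Monoid M] (χ : ι → M →* h)
    (hχ : ∀ i j, ∀ u : h, u ≠ 0 → (∀ z, u * χ i z = χ j z * u) → i = j)
    (s : Finset ι) (a : ι → h) (ha : ∀ z, ∑ i ∈ s, a i * χ i z = 0) : ∀ i ∈ s, a i = 0 := by
  classical
  induction s using Finset.induction_on generalizing a with
  | empty => simp
  | insert i s his ih =>
    have hs : ∀ z, ∑ l ∈ s, a l * χ l z = -(a i * χ i z) := fun z =>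
      eq_neg_of_add_eq_zero_right (by simpa [sum_insert his] using ha z)
    suffices hzero : ∀ j ∈ s, a j = 0 by
      have hi : a i = 0 := by simpa [sum_eq_zero hzero] using hs 1
      simpa [hi] using hzero
    by_cases hai : a i = 0
    · exact ih a fun z => by simpa [hai] using hs z
    -- Subtracting `a i χ_i(y) a_i⁻¹` times the relation at `z` from the relation at `y z`
    -- eliminates `χ_i` and leaves a shorter relation.
    have key : ∀ y, ∀ j ∈ s, a j * χ j y = a i * χ i y * (a i)⁻¹ * a j := fun y =>
      have hshort : ∀ z, ∑ l ∈ s, (a l * χ l y - a i * χ i y * (a i)⁻¹ * a l) * χ l z = 0 :=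
        fun z => calc
          _ = ∑ l ∈ s, a l * χ l (y * z) - a i * χ i y * (a i)⁻¹ * ∑ l ∈ s, a l * χ l z := by
            simp only [map_mul, sub_mul, mul_assoc, sum_sub_distrib, mul_sum]
          _ = 0 := by
            rw [hs, hs, map_mul, mul_neg, sub_neg_eq_add, mul_assoc _ (a i)⁻¹,
              inv_mul_cancel_left₀ hai, mul_assoc, neg_add_cancel]
      fun j hj => sub_eq_zero.1 (ih _ hshort j hj)
    intro j hj
    by_contra haj
    have hji : j = i := hχ j i ((a i)⁻¹ * a j) (mul_ne_zero (inv_ne_zero hai) haj) fun y => by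
      rw [mul_assoc, key y j hj, mul_assoc, mul_assoc, inv_mul_cancel_left₀ hai]
    exact his (hji ▸ hj)

theorem RingHom.eq_of_conj_of_outer {K : Set h}
    (houter : ∀ u : h, u ≠ 0 → (∀ a ∈ K, u * a = a * u) → ∀ x, u * x = x * u)
    {D : Subfield h} (hKD : K ⊆ D) {φ ψ : D →+* h}
    (hφ : ∀ a : D, (a : h) ∈ K → φ a = a) (hψ : ∀ a : D, (a : h) ∈ K → ψ a = a)
    {u : h} (hu : u ≠ 0) (hconj : ∀ z, u * φ z = ψ z * u) : φ = ψ := by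
  have hcomm : ∀ a ∈ K, u * a = a * u := fun a ha => by
    simpa [hφ ⟨a, hKD ha⟩ ha, hψ ⟨a, hKD ha⟩ ha] using hconj ⟨a, hKD ha⟩
  ext z
  exact mul_right_cancel₀ hu ((houter u hu hcomm (φ z)).symm.trans (hconj z))

theorem card_le_of_forall_eq_sum_mul {K : Set h} {D : Subfield h} (hKD : K ⊆ D)
    {ι : Type*} [Fintype ι] (χ : ι → D →+* h) (hχK : ∀ i, ∀ a : D, (a : h) ∈ K → χ i a = a)
    (hχ : ∀ i j, ∀ u : h, u ≠ 0 → (∀ z, u * χ i z = χ j z * u) → i = j)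
    {N : ℕ} (b : Fin N → h) (hbD : ∀ j, b j ∈ D)
    (hb : ∀ y ∈ D, ∃ c : Fin N → h, (∀ j, c j ∈ K) ∧ y = ∑ j, b j * c j) :
    Fintype.card ι ≤ N := by
  by_contra! hlt
  obtain ⟨a, ha0, ha⟩ := exists_ne_zero_sum_mul_eq_zero (κ := Fin N) (by simpa using hlt)
    fun j i => χ i ⟨b j, hbD j⟩
  refine ha0 (funext fun i => eq_zero_of_forall_sum_mul_monoidHom_eq_zero
    (fun i => (χ i : D →* h)) hχ univ a (fun y => ?_) i (mem_univ i))
  obtain ⟨c, hcK, hy⟩ := hb y y.2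
  have hyD : y = ∑ j, ⟨b j, hbD j⟩ * ⟨c j, hKD (hcK j)⟩ := Subtype.ext (by simpa using hy)
  have hχc : ∀ i j, χ i ⟨c j, hKD (hcK j)⟩ = c j := fun i j => hχK i _ (hcK j)
  calc ∑ i, a i * χ i y = ∑ j, (∑ i, a i * χ i ⟨b j, hbD j⟩) * c j := by
        rw [hyD]
        simp only [map_sum, map_mul, hχc, mul_sum, sum_mul, mul_assoc]
        exact sum_comm
    _ = 0 := by simp [ha]

theorem isAlgebraicOverSet_of_forall_eq_sum {k : Set h} (hk : (0 : h) ∈ k) {x : h} {m n : ℕ}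
    (bL : Fin m → h) (bR : Fin n → h)
    (hL : ∀ y ∈ Subfield.closure (insert x k), ∃ c : Fin m → h,
      (∀ i, c i ∈ k) ∧ y = ∑ i, c i * bL i)
    (hR : ∀ y ∈ Subfield.closure (insert x k), ∃ c : Fin n → h,
      (∀ i, c i ∈ k) ∧ y = ∑ i, bR i * c i) :
    IsAlgebraicOverSet k x := by
  refine ⟨m + n, Fin.append bL bR, fun y hy => ?_, fun y hy => ?_⟩
  · obtain ⟨c, hck, rfl⟩ := hL y hy
    exact ⟨Fin.append c 0, Fin.addCases (by simpa using hck) fun _ => by simpa using hk,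
      by simp [Fin.sum_univ_add]⟩
  · obtain ⟨c, hck, rfl⟩ := hR y hy
    exact ⟨Fin.append 0 c, Fin.addCases (fun _ => by simpa using hk) (by simpa using hck),
      by simp [Fin.sum_univ_add]⟩

end DivisionRing

section Action

variable {G : Type*} [Group G] {h : Type*} [DivisionRing h] [MulSemiringAction G h]

theorem Submodule.exists_mem_ne_zero_forall_smul_eq {ι : Type*} [Finite ι]
    (W : Submodule h (ι → h)) (hW : ∀ g : G, ∀ c ∈ W, g • c ∈ W) (hne : W ≠ ⊥) :
    ∃ c ∈ W, c ≠ 0 ∧ ∀ g : G, g • c = c := by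
  obtain ⟨c, ⟨hcW, hc0⟩, hmin⟩ := (measure fun c : ι → h => (Function.support c).ncard).wf.has_min
    {c | c ∈ W ∧ c ≠ 0} ((Submodule.ne_bot_iff W).1 hne)
  obtain ⟨j, hj⟩ := Function.ne_iff.1 hc0
  set c' := (c j)⁻¹ • c
  have hc'W : c' ∈ W := W.smul_mem _ hcW
  have hc'j : c' j = 1 := inv_mul_cancel₀ hj
  have hsupp : Function.support c' = Function.support c :=
    Function.support_const_smul_of_ne_zero _ _ (inv_ne_zero hj)
  refine ⟨c', hc'W, fun h0 => one_ne_zero (hc'j.symm.trans (congrFun h0 j)), fun g => ?_⟩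
  -- `c' - g • c'` lies in `W` and its support misses `j`, so minimality forces it to vanish.
  by_contra hg
  refine hmin (c' - g • c') ⟨W.sub_mem hc'W (hW g _ hc'W), sub_ne_zero.2 (Ne.symm hg)⟩ ?_
  show (Function.support (c' - g • c')).ncard < (Function.support c).ncard
  rw [← hsupp]
  refine Set.ncard_lt_ncard ⟨fun i hi => ?_, fun hsub => ?_⟩
  · contrapose! hi
    simp [Function.notMem_support.1 hi]
  · simpa [hc'j] using hsub (by simp [hc'j] : j ∈ Function.support c')

theorem exists_ne_zero_fixed_sum_mul_eq_zero (H : Subgroup G) [H.FiniteIndex]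
    {ι : Type*} [Fintype ι] (hι : H.index < Fintype.card ι) (u : ι → h)
    (hu : ∀ i, u i ∈ fixedSubfield H h) :
    ∃ c : ι → h, c ≠ 0 ∧ (∀ g : G, g • c = c) ∧ ∑ i, c i * u i = 0 := by
  let W : Submodule h (ι → h) :=
    ⨅ σ : G, LinearMap.ker (Fintype.linearCombination h fun i => σ • u i)
  have hmem : ∀ c, c ∈ W ↔ ∀ σ : G, ∑ i, c i * σ • u i = 0 := by
    simp [W, Fintype.linearCombination_apply]
  have hout : ∀ σ : G, ∀ i, (σ : G ⧸ H).out • u i = σ • u i := fun σ i => by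
    obtain ⟨τ, hτ⟩ := QuotientGroup.mk_out_eq_mul H σ
    rw [hτ, mul_smul]
    exact congrArg (σ • ·) (hu i τ)
  obtain ⟨a, ha0, ha⟩ := exists_ne_zero_sum_mul_eq_zero (κ := G ⧸ H)
    (by rwa [← H.index_eq_card]) fun q i => q.out • u i
  have hW : W ≠ ⊥ :=
    (Submodule.ne_bot_iff W).2 ⟨a, (hmem a).2 fun σ => by simpa [hout] using ha σ, ha0⟩
  have hstable : ∀ g : G, ∀ c ∈ W, g • c ∈ W := by
    intro g c hc
    rw [hmem] at hc ⊢
    intro σ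
    calc ∑ i, (g • c) i * σ • u i = g • ∑ i, c i * (g⁻¹ * σ) • u i := by
          simp [smul_sum, smul_mul', mul_smul]
      _ = 0 := by rw [hc, smul_zero]
  obtain ⟨c, hcW, hc0, hcfix⟩ := W.exists_mem_ne_zero_forall_smul_eq hstable hW
  exact ⟨c, hc0, hcfix, by simpa using (hmem c).1 hcW 1⟩

variable (h) in
def fixedSubmodule (H : Subgroup G) : Submodule (fixedSubfield G h) h where
  carrier := fixedSubfield H h
  add_mem' := add_mem
  zero_mem' := zero_mem _
  smul_mem' c y hy τ := by
    show (τ : G) • ((c : h) * y) = c * y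
    rw [smul_mul', c.2 τ]
    exact congrArg _ (hy τ)

theorem rank_fixedSubmodule_le (H : Subgroup G) [H.FiniteIndex] :
    Module.rank (fixedSubfield G h) (fixedSubmodule h H) ≤ H.index := by
  refine rank_le fun s hs => ?_
  by_contra! hlt
  obtain ⟨c, hc0, hcfix, hsum⟩ := exists_ne_zero_fixed_sum_mul_eq_zero H
    (by simpa using hlt) (fun i : s => ((i : fixedSubmodule h H) : h))
    fun i => (i : fixedSubmodule h H).2
  have hc := Fintype.linearIndependent_iff.1 hs (fun i => ⟨c i, fun g => congrFun (hcfix g) i⟩)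
    (Subtype.ext (by simpa [Subfield.smul_def] using hsum))
  exact hc0 (funext fun i => congrArg Subtype.val (hc i))

theorem exists_forall_eq_sum_mul_left (H : Subgroup G) [H.FiniteIndex] :
    ∃ (N : ℕ) (b : Fin N → h), N ≤ H.index ∧ (∀ i, b i ∈ fixedSubfield H h) ∧
      ∀ y ∈ fixedSubfield H h, ∃ c : Fin N → h,
        (∀ i, c i ∈ fixedSubfield G h) ∧ y = ∑ i, c i * b i := by
  have hrank := rank_fixedSubmodule_le (h := h) H
  have : Module.Finite (fixedSubfield G h) (fixedSubmodule h H) :=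
    Module.rank_lt_aleph0_iff.1 (hrank.trans_lt Cardinal.natCast_lt_aleph0)
  let b := Module.finBasis (fixedSubfield G h) (fixedSubmodule h H)
  refine ⟨_, fun i => b i, Module.finrank_le_of_rank_le hrank, fun i => (b i).2,
    fun y hy => ⟨fun i => b.repr ⟨y, hy⟩ i, fun i => (b.repr ⟨y, hy⟩ i).2, ?_⟩⟩
  calc y = ((∑ i, b.repr ⟨y, hy⟩ i • b i : fixedSubmodule h H) : h) := by rw [b.sum_repr]
    _ = _ := by simp only [Submodule.coe_sum, Submodule.coe_smul]; rfl

theorem op_mem_fixedSubfield_iff {M : Type*} [Monoid M] [MulSemiringAction M h] {y : h} :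
    op y ∈ fixedSubfield M hᵐᵒᵖ ↔ y ∈ fixedSubfield M h :=
  forall_congr' fun _ => op_inj

theorem exists_forall_eq_sum_mul_right (H : Subgroup G) [H.FiniteIndex] :
    ∃ (N : ℕ) (b : Fin N → h), N ≤ H.index ∧ (∀ i, b i ∈ fixedSubfield H h) ∧
      ∀ y ∈ fixedSubfield H h, ∃ c : Fin N → h,
        (∀ i, c i ∈ fixedSubfield G h) ∧ y = ∑ i, b i * c i := by
  obtain ⟨N, b, hN, hb, hspan⟩ := exists_forall_eq_sum_mul_left (h := hᵐᵒᵖ) H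
  refine ⟨N, fun i => (b i).unop, hN, fun i => op_mem_fixedSubfield_iff.1 (hb i), fun y hy => ?_⟩
  obtain ⟨c, hc, hy'⟩ := hspan (op y) (op_mem_fixedSubfield_iff.2 hy)
  exact ⟨fun i => (c i).unop, fun i => op_mem_fixedSubfield_iff.1 (hc i),
    by simpa using congrArg unop hy'⟩

theorem fixedSubfield_le_fixedSubfield (H : Subgroup G) : fixedSubfield G h ≤ fixedSubfield H h :=
  fun _ ha τ => ha τ

theorem subset_fixedSubfield_fixingSubgroup (S : Set h) :
    S ⊆ fixedSubfield (fixingSubgroup G S) h :=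
  fun x hx τ => (mem_fixingSubgroup_iff G).1 τ.2 x hx

theorem isAlgebraicOverSet_fixedSubfield (x : h) [(fixingSubgroup G ({x} : Set h)).FiniteIndex] :
    IsAlgebraicOverSet (fixedSubfield G h) x := by
  set H := fixingSubgroup G ({x} : Set h)
  have hcl : Subfield.closure (insert x (fixedSubfield G h : Set h)) ≤ fixedSubfield H h :=
    Subfield.closure_le.2 (Set.insert_subset (subset_fixedSubfield_fixingSubgroup _ rfl)
      (fixedSubfield_le_fixedSubfield H))
  obtain ⟨m, bL, -, -, hL⟩ := exists_forall_eq_sum_mul_left (h := h) H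
  obtain ⟨n, bR, -, -, hR⟩ := exists_forall_eq_sum_mul_right (h := h) H
  exact isAlgebraicOverSet_of_forall_eq_sum (zero_mem _) bL bR
    (fun y hy => hL y (hcl hy)) fun y hy => hR y (hcl hy)

theorem exists_smul_eq_of_finiteIndex
    (houter : ∀ u : h, u ≠ 0 → (∀ a ∈ fixedSubfield G h, u * a = a * u) → ∀ x, u * x = x * u)
    (f : h ≃+* h) (hf : ∀ a ∈ fixedSubfield G h, f a = a)
    (S : Set h) [(fixingSubgroup G S).FiniteIndex] : ∃ g : G, ∀ x ∈ S, f x = g • x := by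
  set H := fixingSubgroup G S
  set D := fixedSubfield H h
  have := Fintype.ofFinite (G ⧸ H)
  by_contra! hne
  have hkD : (fixedSubfield G h : Set h) ⊆ D := fixedSubfield_le_fixedSubfield H
  have hSD : S ⊆ D := subset_fixedSubfield_fixingSubgroup S
  let χ : Option (G ⧸ H) → D →+* h := fun i =>
    (i.elim (f : h →+* h) fun q => MulSemiringAction.toRingHom G h q.out).comp D.subtype
  have hχK : ∀ i, ∀ a : D, (a : h) ∈ fixedSubfield G h → χ i a = a := by
    rintro (_ | q) a ha
    exacts [hf a ha, ha q.out]
  have hχ : Function.Injective χ := by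
    rintro (_ | q) (_ | q') hqq'
    · rfl
    · obtain ⟨x, hx, hfx⟩ := hne q'.out
      exact absurd (RingHom.congr_fun hqq' ⟨x, hSD hx⟩) hfx
    · obtain ⟨x, hx, hfx⟩ := hne q.out
      exact absurd (RingHom.congr_fun hqq' ⟨x, hSD hx⟩).symm hfx
    · rw [← QuotientGroup.out_eq' q, ← QuotientGroup.out_eq' q', Option.some_inj,
        QuotientGroup.eq, mem_fixingSubgroup_iff]
      intro x hx
      rw [mul_smul, inv_smul_eq_iff]
      exact (RingHom.congr_fun hqq' ⟨x, hSD hx⟩).symm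
  obtain ⟨N, b, hN, hbD, hb⟩ := exists_forall_eq_sum_mul_right (h := h) H
  have hcard := card_le_of_forall_eq_sum_mul hkD χ hχK
    (fun i j u hu hconj => hχ (RingHom.eq_of_conj_of_outer houter hkD (hχK i) (hχK j) hu hconj))
    b hbD hb
  rw [Fintype.card_option, ← Nat.card_eq_fintype_card, ← H.index_eq_card] at hcard
  omega

end Action

section Topology

variable {G : Type*} [Group G] [TopologicalSpace G] [SeparatelyContinuousMul G] {X : Type*}
  [MulAction G X]

theorem finiteIndex_fixingSubgroup [CompactSpace G]
    (hopen : ∀ x : X, IsOpen {σ : G | σ • x = x}) {S : Set X} (hS : S.Finite) :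
    (fixingSubgroup G S).FiniteIndex := by
  have hSopen : IsOpen (fixingSubgroup G S : Set G) := by
    convert hS.isOpen_biInter fun x _ => hopen x using 1
    ext
    simp [mem_fixingSubgroup_iff]
  have := Subgroup.quotient_finite_of_isOpen _ hSopen
  exact Subgroup.finiteIndex_of_finite_quotient

theorem isLocallyConstant_smul (hopen : ∀ x : X, IsOpen {σ : G | σ • x = x}) (x : X) :
    IsLocallyConstant fun g : G => g • x :=
  (IsLocallyConstant.iff_exists_open _).2 fun g₀ =>
    ⟨(g₀⁻¹ * ·) ⁻¹' {σ | σ • x = x}, (hopen x).preimage (continuous_const_mul _), by simp,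
      fun g hg => by simpa [mul_smul, inv_smul_eq_iff] using hg⟩

end Topology

theorem existsUnique_smul_eq {G : Type*} [Group G] [TopologicalSpace G]
    [SeparatelyContinuousMul G] [CompactSpace G] {h : Type*} [DivisionRing h]
    [MulSemiringAction G h] (hfaithful : ∀ g : G, (∀ x : h, g • x = x) → g = 1)
    (hopen : ∀ x : h, IsOpen {σ : G | σ • x = x})
    (houter : ∀ u : h, u ≠ 0 → (∀ a ∈ fixedSubfield G h, u * a = a * u) → ∀ x, u * x = x * u)
    (f : h ≃+* h) (hf : ∀ a ∈ fixedSubfield G h, f a = a) :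
    ∃! g : G, ∀ x : h, f x = g • x := by
  obtain ⟨g, hg⟩ : (⋂ x, {g : G | g • x = f x}).Nonempty :=
    CompactSpace.iInter_nonempty (fun x => (isLocallyConstant_smul hopen x).isClosed_fiber _)
      fun t => by
        have := finiteIndex_fixingSubgroup hopen t.finite_toSet
        obtain ⟨g, hg⟩ := exists_smul_eq_of_finiteIndex houter f hf (t : Set h)
        exact ⟨g, Set.mem_iInter₂.2 fun x hx => (hg x hx).symm⟩
  have hg : ∀ x, f x = g • x := fun x => (Set.mem_iInter.1 hg x).symm
  refine ⟨g, hg, fun g' hg' => (inv_mul_eq_one.1 (hfaithful _ fun x => ?_)).symm⟩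
  rw [mul_smul, ← hg', hg, inv_smul_smul]

theorem generalized_artin_lemma_general
    (G : Type*) [Group G] [TopologicalSpace G] [IsTopologicalGroup G] [CompactSpace G]
    (h : Type*) [DivisionRing h] [MulSemiringAction G h]
    (hfaithful : ∀ g : G, (∀ x : h, g • x = x) → g = 1)
    (hopen : ∀ x : h, IsOpen {σ : G | σ • x = x})
    (houter : ∀ u : h, u ≠ 0 → (∀ a : h, (∀ g : G, g • a = a) → u * a = a * u) →
      ∀ x : h, u * x = x * u) :
    (∀ x : h, IsAlgebraicOverSet {y : h | ∀ g : G, g • y = y} x) ∧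
    (∀ x : h, (∀ f : h ≃+* h, (∀ a : h, (∀ g : G, g • a = a) → f a = a) → f x = x) →
      ∀ g : G, g • x = x) ∧
    (∀ f : h ≃+* h, (∀ a : h, (∀ g : G, g • a = a) → f a = a) →
      ∃! g : G, ∀ x : h, f x = g • x) := by
  refine ⟨fun x => ?_, fun x hx g => hx (MulSemiringAction.toRingEquiv G h g) fun a ha => ha g,
    fun f hf => existsUnique_smul_eq hfaithful hopen houter f hf⟩
  have := finiteIndex_fixingSubgroup hopen (Set.finite_singleton x)
  exact isAlgebraicOverSet_fixedSubfield x

/-- Generalized Artin lemma.  Let `G` be a profinite group acting faithfully by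
automorphisms on a division ring `h`, with open stabilizers, and let `k = h^G`.  If `h/k`
is outer, then `h/k` is algebraic, Galois (`k` is the fixed field of `Aut(h/k)`), and
`Gal(h/k) ≅ G`: every automorphism of `h` fixing `k` pointwise is given by the action of a
unique element of `G`. -/
theorem generalized_artin_lemma
    (G : Type*) [Group G] [TopologicalSpace G] [IsTopologicalGroup G]
    [CompactSpace G] [T2Space G] [TotallyDisconnectedSpace G]
    (h : Type*) [DivisionRing h] [MulSemiringAction G h]
    (hfaithful : ∀ g : G, (∀ x : h, g • x = x) → g = 1)
    (hopen : ∀ x : h, IsOpen {σ : G | σ • x = x})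
    (houter : ∀ u : h, u ≠ 0 → (∀ a : h, (∀ g : G, g • a = a) → u * a = a * u) →
      ∀ x : h, u * x = x * u) :
    (∀ x : h, IsAlgebraicOverSet {y : h | ∀ g : G, g • y = y} x) ∧
    (∀ x : h, (∀ f : h ≃+* h, (∀ a : h, (∀ g : G, g • a = a) → f a = a) → f x = x) →
      ∀ g : G, g • x = x) ∧
    (∀ f : h ≃+* h, (∀ a : h, (∀ g : G, g • a = a) → f a = a) →
      ∃! g : G, ∀ x : h, f x = g • x) :=
  generalized_artin_lemma_general G h hfaithful hopen houter
end

section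
/- Let k be a commutative field, σ ∈ Aut(k) of infinite order, and consider the twisted rational function division ring k(t,σ) ⊆ k((t,σ)). Then the center of k(t,σ) is contained in k; consequently no subextension of k(t,σ)/k is k-isomorphic to the rational function field k(t) with central indeterminate. -/
/-- Let `k` be a commutative field and `σ` an automorphism of `k` of infinite order.  The
division ring `D` models the twisted rational function field `k(t,σ)` inside `k((t,σ))`:
`ι : k → D` embeds the constants and `coeff : D → (ℤ → k)` is the injective Laurent
coefficient map subject to the twisted multiplication rules (`t·a = σ(a)·t`).  Then the
center of `D = k(t,σ)` is contained in `k`; consequently there is no `k`-embedding of the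
rational function field `k(t)` (with central indeterminate) into `k(t,σ)`, i.e. no
subextension of `k(t,σ)/k` is `k`-isomorphic to `k(t)`. -/
theorem twisted_rational_center_le_base_and_no_central_subfield
    {k D : Type*} [Field k] [DivisionRing D] (σ : k ≃+* k)
    (ι : k →+* D) (coeff : D → ℤ → k)
    (hinj : Function.Injective coeff)
    (hconst : ∀ a : k, ∀ n : ℤ, coeff (ι a) n = if n = 0 then a else 0)
    (hmul_right : ∀ (S : D) (a : k) (n : ℤ), coeff (S * ι a) n = coeff S n * (σ ^ n) a)
    (hmul_left : ∀ (S : D) (a : k) (n : ℤ), coeff (ι a * S) n = a * coeff S n)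
    (hinf : ∀ n : ℤ, n ≠ 0 → (σ ^ n : k ≃+* k) ≠ 1) :
    (∀ x ∈ Set.center D, x ∈ Set.range ι) ∧
    ¬∃ f : RatFunc k →+* D, ∀ a : k, f (algebraMap k (RatFunc k) a) = ι a := by
  have key : ∀ x : D, (∀ a : k, x * ι a = ι a * x) → x ∈ Set.range ι := by
    intro x hx
    refine ⟨coeff x 0, ?_⟩
    apply hinj
    funext n
    rw [hconst]
    split_ifs with h
    · subst h; rfl
    · -- show coeff x n = 0 for n ≠ 0
      have hne := hinf n h
      have : ∃ a : k, (σ ^ n) a ≠ a := by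
        by_contra hc
        push_neg at hc
        exact hne (RingEquiv.ext hc)
      obtain ⟨a, ha⟩ := this
      have h1 : coeff x n * (σ ^ n) a = a * coeff x n := by
        rw [← hmul_right, hx a, hmul_left]
      rw [mul_comm a] at h1
      have h2 : coeff x n * ((σ ^ n) a - a) = 0 := by
        rw [mul_sub, h1, sub_self]
      rcases mul_eq_zero.mp h2 with h3 | h3
      · symm; exact h3
      · exact absurd (sub_eq_zero.mp h3) ha
  constructor
  · intro x hx
    exact key x fun a => (Set.mem_center_iff.mp hx).1 (ι a)
  · rintro ⟨f, hf⟩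
    have hcomm : ∀ a : k, f RatFunc.X * ι a = ι a * f RatFunc.X := by
      intro a
      rw [← hf, ← map_mul, ← map_mul, mul_comm]
    obtain ⟨b, hb⟩ := key (f RatFunc.X) hcomm
    have hfi : Function.Injective f := f.injective
    have : RatFunc.X = algebraMap k (RatFunc k) b := hfi (by rw [hf, hb])
    have hX : (algebraMap (Polynomial k) (RatFunc k)) Polynomial.X
        = algebraMap (Polynomial k) (RatFunc k) (Polynomial.C b) := by
      rw [RatFunc.algebraMap_X, this]
      simp [RatFunc.algebraMap_eq_C, RatFunc.algebraMap_C]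
    have := RatFunc.algebraMap_injective k hX
    exact Polynomial.X_ne_C b this
end
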